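/- arXiv:1307.4111 — 2 statements merged into one kernel-verified Lean document; each statement's English description precedes it below -/
import Mathlib

section
/- If (S,T) is a ψ-(α,β,m)-contraction pair on a metric space (M,d), then any point of coincidence of S and T is unique: if Sx = Tx = w and Sy = Ty = v, then w = v. -/
theorem stmt4 {M : Type*} [MetricSpace M] (S T : M → M)
    (ψ : ℝ → ℝ)
    (hψ0 : ∀ t, 0 ≤ t → (ψ t = 0 ↔ t = 0))
    (hψ_nonneg : ∀ t, 0 ≤ t → 0 ≤ ψ t)
    (hψ_mono : MonotoneOn ψ (Set.Ici 0))
    (hψ_cont : ContinuousOn ψ (Set.Ici 0))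
    (α β : ℝ → ℝ)
    (hα : ∀ t, 0 ≤ t → 0 ≤ α t ∧ α t < 1)
    (hβ : ∀ t, 0 ≤ t → 0 ≤ β t ∧ β t < 1)
    (hαβ : ∀ t, 0 ≤ t → α t + β t < 1)
    (hcontr : ∀ x y : M,
      ψ (dist (S x) (S y)) ≤
        α (dist (T x) (T y)) * ψ (dist (T x) (T y)) +
        β (dist (T x) (T y)) *
          ψ (max (dist (S y) (T y) * (1 + dist (S x) (T x)) / (1 + dist (T x) (T y)))
                 (dist (T x) (T y))))
    (x y : M) (w v : M)
    (hx : S x = T x) (hw : S x = w)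
    (hy : S y = T y) (hv : S y = v) :
    w = v := by
  have h := hcontr x y
  rw [← hx, ← hy, hw, hv] at h
  set d := dist w v with hd
  have hd0 : (0:ℝ) ≤ d := dist_nonneg
  simp only [dist_self, zero_mul, zero_div, max_eq_right hd0] at h
  have hkey : ψ d ≤ (α d + β d) * ψ d := by ring_nf; ring_nf at h; linarith
  have hψd : ψ d = 0 := by
    by_contra hne
    have hpos : 0 < ψ d := lt_of_le_of_ne (hψ_nonneg d hd0) (Ne.symm hne)
    nlinarith [hαβ d hd0]
  have : d = 0 := (hψ0 d hd0).mp hψd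
  exact dist_eq_zero.mp this
end

section
/- If (S,T) is a ψ-(α,β,m)-contraction pair with S(M) ⊆ T(M), and (x_n) satisfies Sx_n = Tx_{n+1}, then for each n, ψ(d(Tx_{n+1}, Tx_{n+2})) < ψ(d(Tx_n, Tx_{n+1})) whenever d(Tx_n, Tx_{n+1}) > 0, hence the sequence d(Tx_n, Tx_{n+1}) is nonincreasing. -/
open Filter Topology

theorem stmt8 {M : Type*} [MetricSpace M] (S T : M → M)
    (hrange : Set.range S ⊆ Set.range T)
    (ψ : ℝ → ℝ)
    (hψ0 : ∀ t, 0 ≤ t → (ψ t = 0 ↔ t = 0))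
    (hψ_nonneg : ∀ t, 0 ≤ t → 0 ≤ ψ t)
    (hψ_mono : MonotoneOn ψ (Set.Ici 0))
    (hψ_cont : ContinuousOn ψ (Set.Ici 0))
    (α β : ℝ → ℝ)
    (hα : ∀ t, 0 ≤ t → 0 ≤ α t ∧ α t < 1)
    (hβ : ∀ t, 0 ≤ t → 0 ≤ β t ∧ β t < 1)
    (hαβ : ∀ t, 0 ≤ t → α t + β t < 1)
    (hβ0 : Filter.limsup β (nhdsWithin 0 (Set.Ioi 0)) < 1)
    (hαβt : ∀ t : ℝ, 0 < t →
      Filter.limsup (fun s => α s / (1 - β s)) (nhdsWithin t (Set.Ioi t)) < 1)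
    (hcontr : ∀ x y : M,
      ψ (dist (S x) (S y)) ≤
        α (dist (T x) (T y)) * ψ (dist (T x) (T y)) +
        β (dist (T x) (T y)) *
          ψ (max (dist (S y) (T y) * (1 + dist (S x) (T x)) / (1 + dist (T x) (T y)))
                 (dist (T x) (T y))))
    (x : ℕ → M) (hseq : ∀ n, S (x n) = T (x (n + 1))) :
    (∀ n, 0 < dist (T (x n)) (T (x (n + 1))) →
        ψ (dist (T (x (n + 1))) (T (x (n + 2)))) < ψ (dist (T (x n)) (T (x (n + 1))))) ∧
    (∀ n, dist (T (x (n + 1))) (T (x (n + 2))) ≤ dist (T (x n)) (T (x (n + 1)))) := by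

  -- key inequality
  have key : ∀ n, ψ (dist (T (x (n+1))) (T (x (n+2)))) ≤
      α (dist (T (x n)) (T (x (n+1)))) * ψ (dist (T (x n)) (T (x (n+1)))) +
      β (dist (T (x n)) (T (x (n+1)))) *
        ψ (max (dist (T (x (n+1))) (T (x (n+2)))) (dist (T (x n)) (T (x (n+1))))) := by
    intro n
    have h := hcontr (x n) (x (n+1))
    rw [hseq n, hseq (n+1)] at h
    set d := dist (T (x n)) (T (x (n+1))) with hd
    set e := dist (T (x (n+1))) (T (x (n+2))) with he
    have h1 : dist (T (x (n+2))) (T (x (n+1))) = e := dist_comm _ _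
    have h2 : dist (T (x (n+1))) (T (x n)) = d := dist_comm _ _
    rw [h1, h2] at h
    have hdpos : (0:ℝ) < 1 + d := by positivity
    have : e * (1 + d) / (1 + d) = e := by field_simp
    rwa [this] at h
  have hnonincr : ∀ n, dist (T (x (n+1))) (T (x (n+2))) ≤ dist (T (x n)) (T (x (n+1))) := by
    intro n
    by_contra hlt
    push_neg at hlt
    set d := dist (T (x n)) (T (x (n+1))) with hd
    set e := dist (T (x (n+1))) (T (x (n+2))) with he
    have hd0 : (0:ℝ) ≤ d := dist_nonneg
    have he0 : (0:ℝ) ≤ e := dist_nonneg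
    have hmax : max e d = e := max_eq_left hlt.le
    have h := key n
    rw [hmax] at h
    have hmono : ψ d ≤ ψ e := hψ_mono hd0 he0 hlt.le
    have hα' := (hα d hd0).1
    have hle : ψ e ≤ (α d + β d) * ψ e := by nlinarith [hψ_nonneg e he0]
    have hψe : ψ e = 0 := by nlinarith [hαβ d hd0, hψ_nonneg e he0]
    have : e = 0 := (hψ0 e he0).1 hψe
    linarith
  refine ⟨?_, hnonincr⟩
  intro n hdpos
  set d := dist (T (x n)) (T (x (n+1))) with hd
  set e := dist (T (x (n+1))) (T (x (n+2))) with he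
  have hd0 : (0:ℝ) ≤ d := dist_nonneg
  have he0 : (0:ℝ) ≤ e := dist_nonneg
  have hle : e ≤ d := hnonincr n
  have hmax : max e d = d := max_eq_right hle
  have h := key n
  rw [hmax] at h
  have hψd : 0 < ψ d := by
    rcases lt_or_eq_of_le (hψ_nonneg d hd0) with h' | h'
    · exact h'
    · exact absurd ((hψ0 d hd0).1 h'.symm) (ne_of_gt hdpos)
  nlinarith [hαβ d hd0, (hα d hd0).1, (hβ d hd0).1]
end
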